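/- arXiv:2502.18014 — 7 statements merged into one kernel-verified Lean document; each statement's English description precedes it below -/
import Mathlib

section
/- Fix an integer K ≥ 1 and a real number γ < 0. Let ψ = (ψ₁, …, ψ_K) be a K-tuple of functions ψ_k : [0,∞) → ℂ, each continuous on [0,∞) and differentiable on (0,∞), with ψ_k and its derivative ψ_k′ square-integrable on (0,∞). Then Σ_{k=1}^K ∫₀^∞ |ψ_k′(x)|² dx + (1/γ)|Σ_{k=1}^K ψ_k(0)|² ≥ −(K²/γ²) Σ_{k=1}^K ∫₀^∞ |ψ_k(x)|² dx. Moreover, equality holds for the tuple ψ_k(x) = e^{Kx/γ}, k = 1, …, K. -/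
/-! On each edge, `‖ψ(0)‖² = -∫₀^∞ (‖ψ‖²)' ≤ ∫₀^∞ 2‖ψ‖‖ψ'‖ ≤ a‖ψ'‖₂² + a⁻¹‖ψ‖₂²` for every
`a > 0`; there is no boundary term at infinity because `‖ψ‖²` and its derivative are
integrable. Cauchy–Schwarz gives `‖∑ ψ_k(0)‖² ≤ K ∑ ‖ψ_k(0)‖²`, and as `1/γ < 0` the choice
`a = -γ/K` turns the two bounds into the claimed one. For `ψ_k = e^{Kx/γ}` every step is an
equality. -/

open MeasureTheory Set Filter
open scoped RealInnerProductSpace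

lemma norm_sum_sq_le_card_mul {ι E : Type*} [SeminormedAddCommGroup E] (s : Finset ι)
    (z : ι → E) : ‖∑ i ∈ s, z i‖ ^ 2 ≤ s.card * ∑ i ∈ s, ‖z i‖ ^ 2 :=
  (pow_le_pow_left₀ (norm_nonneg _) (norm_sum_le s z) 2).trans (sq_sum_le_card_mul_sum_sq ..)

section Trace

variable {E : Type*} [NormedAddCommGroup E] [InnerProductSpace ℝ E]

lemma abs_two_mul_inner_le {a : ℝ} (ha : 0 < a) (u v : E) :
    |2 * ⟪u, v⟫| ≤ a * ‖v‖ ^ 2 + a⁻¹ * ‖u‖ ^ 2 := by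
  have hsq : 0 ≤ a⁻¹ * (a * ‖v‖ - ‖u‖) ^ 2 := by positivity
  have expand : a⁻¹ * (a * ‖v‖ - ‖u‖) ^ 2 = a * ‖v‖ ^ 2 - 2 * ‖u‖ * ‖v‖ + a⁻¹ * ‖u‖ ^ 2 := by
    field_simp
    ring
  rw [abs_mul, abs_two]
  linarith [abs_real_inner_le_norm u v]

variable {f f' : ℝ → E} {b : ℝ}

lemma integrableOn_inner_of_hasDerivAt_Ioi (hd : ∀ x ∈ Ioi b, HasDerivAt f (f' x) x)
    (hf : IntegrableOn (fun x => ‖f x‖ ^ 2) (Ioi b))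
    (hf' : IntegrableOn (fun x => ‖f' x‖ ^ 2) (Ioi b)) :
    IntegrableOn (fun x => 2 * ⟪f x, f' x⟫) (Ioi b) := by
  -- `f'` need not be measurable, but `2 ⟪f, f'⟫` is a.e. the derivative of `‖f‖²`.
  have hmeas : AEStronglyMeasurable (fun x => 2 * ⟪f x, f' x⟫) (volume.restrict (Ioi b)) := by
    refine (measurable_deriv (‖f ·‖ ^ 2)).aestronglyMeasurable.congr ?_
    filter_upwards [ae_restrict_mem measurableSet_Ioi] with x hx
    exact (hd x hx).norm_sq.deriv
  refine (hf'.add hf).mono' hmeas (Eventually.of_forall fun x => ?_)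
  simpa using abs_two_mul_inner_le one_pos (f x) (f' x)

theorem norm_sq_le_of_hasDerivAt_Ioi (hc : ContinuousWithinAt f (Ici b) b)
    (hd : ∀ x ∈ Ioi b, HasDerivAt f (f' x) x)
    (hf : IntegrableOn (fun x => ‖f x‖ ^ 2) (Ioi b))
    (hf' : IntegrableOn (fun x => ‖f' x‖ ^ 2) (Ioi b)) {a : ℝ} (ha : 0 < a) :
    ‖f b‖ ^ 2 ≤ a * (∫ x in Ioi b, ‖f' x‖ ^ 2) + a⁻¹ * ∫ x in Ioi b, ‖f x‖ ^ 2 := by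
  have hg := integrableOn_inner_of_hasDerivAt_Ioi hd hf hf'
  have hlim : Tendsto (‖f ·‖ ^ 2) atTop (nhds 0) :=
    tendsto_zero_of_hasDerivAt_of_integrableOn_Ioi (fun x hx => (hd x hx).norm_sq) hg hf
  have hftc : ∫ x in Ioi b, 2 * ⟪f x, f' x⟫ = 0 - ‖f b‖ ^ 2 :=
    integral_Ioi_of_hasDerivAt_of_tendsto (hc.norm.pow 2) (fun x hx => (hd x hx).norm_sq) hg hlim
  calc ‖f b‖ ^ 2 = ∫ x in Ioi b, -(2 * ⟪f x, f' x⟫) := by rw [integral_neg, hftc]; ring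
    _ ≤ ∫ x in Ioi b, (a * ‖f' x‖ ^ 2 + a⁻¹ * ‖f x‖ ^ 2) := by
      refine integral_mono hg.neg ((hf'.const_mul a).add (hf.const_mul a⁻¹)) fun x => ?_
      exact (neg_le_abs _).trans (abs_two_mul_inner_le ha (f x) (f' x))
    _ = a * (∫ x in Ioi b, ‖f' x‖ ^ 2) + a⁻¹ * ∫ x in Ioi b, ‖f x‖ ^ 2 := by
      rw [integral_add (hf'.const_mul a) (hf.const_mul a⁻¹), integral_const_mul,
        integral_const_mul]

end Trace

theorem deltaPrime_form_lower_bound {ι E : Type*} [Fintype ι] [Nonempty ι] [NormedAddCommGroup E]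
    [InnerProductSpace ℝ E] {γ : ℝ} (hγ : γ < 0) {ψ ψ' : ι → ℝ → E}
    (hc : ∀ k, ContinuousWithinAt (ψ k) (Ici 0) 0)
    (hd : ∀ k, ∀ x ∈ Ioi (0 : ℝ), HasDerivAt (ψ k) (ψ' k x) x)
    (hψ : ∀ k, IntegrableOn (fun x => ‖ψ k x‖ ^ 2) (Ioi 0))
    (hψ' : ∀ k, IntegrableOn (fun x => ‖ψ' k x‖ ^ 2) (Ioi 0)) :
    -((Fintype.card ι : ℝ) ^ 2 / γ ^ 2) * ∑ k, ∫ x in Ioi (0 : ℝ), ‖ψ k x‖ ^ 2 ≤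
      (∑ k, ∫ x in Ioi (0 : ℝ), ‖ψ' k x‖ ^ 2) + (1 / γ) * ‖∑ k, ψ k 0‖ ^ 2 := by
  set K : ℝ := (Fintype.card ι : ℝ)
  set A := ∑ k, ∫ x in Ioi (0 : ℝ), ‖ψ' k x‖ ^ 2
  set B := ∑ k, ∫ x in Ioi (0 : ℝ), ‖ψ k x‖ ^ 2
  have hK : 0 < K := by simp [K, Fintype.card_pos]
  have hγ0 : γ ≠ 0 := hγ.ne
  set a : ℝ := -γ / K with ha_def
  have ha : 0 < a := div_pos (neg_pos.mpr hγ) hK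
  have hvertex : ‖∑ k, ψ k 0‖ ^ 2 ≤ (K * a) * A + (K * a⁻¹) * B := by
    rw [mul_assoc, mul_assoc, ← mul_add, Finset.mul_sum, Finset.mul_sum, ← Finset.sum_add_distrib]
    refine (norm_sum_sq_le_card_mul _ _).trans (mul_le_mul_of_nonneg_left ?_ hK.le)
    exact Finset.sum_le_sum fun k _ => norm_sq_le_of_hasDerivAt_Ioi (hc k) (hd k) (hψ k) (hψ' k) ha
  have hKa : K * a = -γ := by rw [ha_def]; field_simp
  have hKa' : K * a⁻¹ = -(K ^ 2 / γ) := by rw [ha_def]; field_simp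
  rw [hKa, hKa'] at hvertex
  have hγ' : 1 / γ ≤ 0 := by rw [one_div]; exact inv_nonpos.mpr hγ.le
  calc -(K ^ 2 / γ ^ 2) * B = A + (1 / γ) * (-γ * A + -(K ^ 2 / γ) * B) := by field_simp; ring
    _ ≤ A + (1 / γ) * ‖∑ k, ψ k 0‖ ^ 2 :=
      (add_le_add_iff_left A).mpr (mul_le_mul_of_nonpos_left hvertex hγ')

lemma integral_exp_mul_sq_Ioi {c : ℝ} (hc : c < 0) :
    ∫ x in Ioi (0 : ℝ), Real.exp (c * x) ^ 2 = -(2 * c)⁻¹ := by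
  have hsq : ∀ x, Real.exp (c * x) ^ 2 = Real.exp (2 * c * x) := fun x => by
    rw [sq, ← Real.exp_add]; ring_nf
  simp_rw [hsq, integral_exp_mul_Ioi (by linarith : 2 * c < 0), mul_zero, Real.exp_zero, neg_div,
    one_div]

/-- Bottom of the spectrum of the δ′-coupling star-graph Laplacian with `K` edges and
strength `γ < 0`: the quadratic form is bounded below by `-(K²/γ²)` times the squared `L²`
norm, with equality attained by the tuple `ψ_k(x) = e^{K x / γ}`. -/
theorem deltaPrime_quadratic_form_bound (K : ℕ) (hK : 1 ≤ K) (γ : ℝ) (hγ : γ < 0) :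
    (∀ (ψ ψ' : Fin K → ℝ → ℂ),
      (∀ k, ContinuousOn (ψ k) (Set.Ici 0)) →
      (∀ k, ∀ x ∈ Set.Ioi (0:ℝ), HasDerivAt (ψ k) (ψ' k x) x) →
      (∀ k, IntegrableOn (fun x => ‖ψ k x‖ ^ 2) (Set.Ioi 0)) →
      (∀ k, IntegrableOn (fun x => ‖ψ' k x‖ ^ 2) (Set.Ioi 0)) →
      (∑ k, ∫ x in Set.Ioi (0:ℝ), ‖ψ' k x‖ ^ 2) + (1 / γ) * ‖∑ k, ψ k 0‖ ^ 2 ≥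
        -((K : ℝ) ^ 2 / γ ^ 2) * ∑ k, ∫ x in Set.Ioi (0:ℝ), ‖ψ k x‖ ^ 2) ∧
    ((∑ _k : Fin K, ∫ x in Set.Ioi (0:ℝ), ((K : ℝ) / γ * Real.exp (K * x / γ)) ^ 2)
        + (1 / γ) * ‖∑ _k : Fin K, ((1 : ℂ))‖ ^ 2 =
      -((K : ℝ) ^ 2 / γ ^ 2) * ∑ _k : Fin K, ∫ x in Set.Ioi (0:ℝ),
        (Real.exp (K * x / γ)) ^ 2) := by
  have : NeZero K := ⟨by omega⟩
  refine ⟨fun ψ ψ' hc hd hψ hψ' => ?_, ?_⟩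
  · simpa using deltaPrime_form_lower_bound hγ (fun k => (hc k).continuousWithinAt self_mem_Ici)
      hd hψ hψ'
  · have hKγ : (K : ℝ) / γ < 0 := div_neg_of_pos_of_neg (by exact_mod_cast hK) hγ
    simp_rw [mul_div_right_comm (K : ℝ), mul_pow, integral_const_mul, integral_exp_mul_sq_Ioi hKγ,
      Finset.sum_const, Finset.card_univ, Fintype.card_fin, nsmul_eq_mul, mul_one,
      Complex.norm_natCast]
    field_simp
    ring
end

section
/- Let K ≥ 1 be an integer, γ < 0, p > 1, and 0 < ω < γ²/K². Set b_ω = arctanh(K√ω/|γ|) and let φ(x) = ((p+1)ω/2)^{1/(p−1)} (sinh(((p−1)√ω/2)x + b_ω))^{−2/(p−1)}. Then b_ω > 0 and K·φ′(0) = γ·φ(0); consequently, the symmetric K-tuple (φ, …, φ) satisfies the δ-type vertex conditions on the star graph with K edges: all components have the same value at the vertex and the sum of the inward derivatives at the vertex equals γ times the common vertex value. -/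
/-- The inverse hyperbolic tangent, `arctanh y = ½ log((1+y)/(1-y))`. -/
noncomputable def arctanh (y : ℝ) : ℝ := Real.log ((1 + y) / (1 - y)) / 2

/-! The profile is a power of `sinh` of an affine function, so its logarithmic derivative at
the vertex is `-(2/(p-1)) · ((p-1)√ω/2) / tanh b = -√ω / tanh b`; the choice of `b_ω` makes
`tanh b_ω = K√ω/|γ|`, which turns `K φ'(0) = γ φ(0)` into an identity. -/

open Real Set

theorem arctanh_eq_artanh {y : ℝ} (hy : y ∈ Icc (-1) 1) : arctanh y = artanh y := by
  rw [arctanh, artanh_eq_half_log hy]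
  ring

theorem hasDerivAt_sinh_rpow {a b e x : ℝ} (h : 0 < a * x + b) :
    HasDerivAt (fun x => sinh (a * x + b) ^ e)
      (e * a / tanh (a * x + b) * sinh (a * x + b) ^ e) x := by
  have hsinh : 0 < sinh (a * x + b) := sinh_pos_iff.mpr h
  have hinner : HasDerivAt (fun x => a * x + b) a x := by
    simpa using ((hasDerivAt_id x).const_mul a).add_const b
  refine ((hasDerivAt_rpow_const (p := e) (Or.inl hsinh.ne')).comp x
    ((hasDerivAt_sinh _).comp x hinner)).congr_deriv ?_
  rw [tanh_eq_sinh_div_cosh, rpow_sub_one hsinh.ne']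
  field_simp

theorem mul_sqrt_div_abs_lt_one {K ω γ : ℝ} (hK : 0 < K) (hω : 0 ≤ ω)
    (h : ω < γ ^ 2 / K ^ 2) : K * √ω / |γ| < 1 := by
  have hγ : γ ≠ 0 := by
    rintro rfl
    simp only [ne_eq, OfNat.ofNat_ne_zero, not_false_eq_true, zero_pow, zero_div] at h
    linarith
  rw [div_lt_one (abs_pos.mpr hγ)]
  refine lt_of_pow_lt_pow_left₀ 2 (abs_nonneg γ) ?_
  rwa [mul_pow, sq_sqrt hω, sq_abs, ← lt_div_iff₀' (by positivity)]

/-- With `b_ω = arctanh(K√ω/|γ|)`, the explicit profile satisfies the δ-type vertex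
condition on the star graph with `K` edges: `K φ′(0) = γ φ(0)`, hence the symmetric
`K`-tuple `(φ, …, φ)` has a common vertex value and the sum of its inward derivatives
at the vertex equals `γ` times that common value. -/
theorem delta_vertex_condition (K : ℕ) (hK : 1 ≤ K) (γ p ω : ℝ)
    (hγ : γ < 0) (hp : 1 < p) (hω0 : 0 < ω) (hω1 : ω < γ ^ 2 / (K : ℝ) ^ 2)
    (b : ℝ) (hb : b = arctanh ((K : ℝ) * Real.sqrt ω / |γ|))
    (φ : ℝ → ℝ)
    (hφ : ∀ x, φ x = ((p + 1) * ω / 2) ^ (1 / (p - 1)) *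
      (Real.sinh ((p - 1) * Real.sqrt ω / 2 * x + b)) ^ (-2 / (p - 1))) :
    0 < b ∧ (K : ℝ) * deriv φ 0 = γ * φ 0 ∧
      (∑ _k : Fin K, deriv φ 0) = γ * φ 0 := by
  have hK' : (0 : ℝ) < K := by exact_mod_cast hK
  set y := (K : ℝ) * √ω / |γ|
  have hy : y ∈ Ioo 0 1 :=
    ⟨div_pos (by positivity) (abs_pos.mpr hγ.ne), mul_sqrt_div_abs_lt_one hK' hω0.le hω1⟩
  have hb' : b = artanh y := hb.trans (arctanh_eq_artanh ⟨by linarith [hy.1], hy.2.le⟩)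
  have hb0 : 0 < b := hb' ▸ artanh_pos hy
  have htanh : tanh b = y := hb' ▸ tanh_artanh ⟨by linarith [hy.1], hy.2⟩
  have hderiv : deriv φ 0 = -√ω / y * φ 0 := by
    have hφ' := (hasDerivAt_sinh_rpow (a := (p - 1) * √ω / 2) (e := -2 / (p - 1)) (x := 0)
      (by simpa using hb0)).const_mul (((p + 1) * ω / 2) ^ (1 / (p - 1)))
    rw [hφ 0, show φ = _ from funext hφ, hφ'.deriv]
    simp only [mul_zero, zero_add, htanh]
    field_simp [sub_ne_zero.mpr hp.ne']
  have hvertex : (K : ℝ) * deriv φ 0 = γ * φ 0 := by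
    have hcoef : (K : ℝ) * (-√ω / y) = γ := by
      simp only [y, abs_of_neg hγ]
      field_simp
    rw [hderiv, ← mul_assoc, hcoef]
  exact ⟨hb0, hvertex, by simpa using hvertex⟩
end

section
/- Let K ≥ 1 be an integer, γ < 0, p > 1, and 0 < ω < K²/γ². Set b_ω = arctanh(|γ|√ω/K) and let φ(x) = ((p+1)ω/2)^{1/(p−1)} (sinh(((p−1)√ω/2)x + b_ω))^{−2/(p−1)}. Then b_ω > 0 and K·φ(0) = γ·φ′(0); consequently, the symmetric K-tuple (φ, …, φ) satisfies the δ′-type vertex conditions on the star graph with K edges: all components have the same derivative at the vertex and the sum of the vertex values equals γ times the common derivative value. -/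
open Real

theorem arctanh_eq_artanh_s6 {x : ℝ} (hx : x ∈ Set.Icc (-1) 1) : arctanh x = artanh x := by
  rw [arctanh, artanh_eq_half_log hx]
  ring

theorem abs_mul_sqrt_lt_of_lt_div_sq {γ ω K : ℝ} (hω : 0 ≤ ω) (hK : 0 ≤ K)
    (h : ω < K ^ 2 / γ ^ 2) : |γ| * √ω < K := by
  have hγ : γ ≠ 0 := by
    rintro rfl
    rw [zero_pow two_ne_zero, div_zero] at h
    linarith
  refine (pow_lt_pow_iff_left₀ (by positivity) hK two_ne_zero).1 ?_
  rw [mul_pow, sq_abs, sq_sqrt hω, ← lt_div_iff₀' (by positivity)]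
  exact h

theorem hasDerivAt_const_mul_sinh_rpow (C a b q x : ℝ) (hx : 0 < sinh (a * x + b)) :
    HasDerivAt (fun y => C * sinh (a * y + b) ^ q)
      (q * a * (cosh (a * x + b) / sinh (a * x + b)) * (C * sinh (a * x + b) ^ q)) x := by
  have hlin : HasDerivAt (fun y => a * y + b) a x := by
    simpa using ((hasDerivAt_id x).const_mul a).add_const b
  refine ((((hasDerivAt_sinh _).comp x hlin).rpow_const (Or.inl hx.ne')).const_mul C).congr_deriv ?_
  rw [Function.comp_apply, rpow_sub_one hx.ne']
  field_simp

theorem deltaPrime_vertex_condition_general (K : ℕ) (γ p ω : ℝ)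
    (hγ : γ < 0) (hp : 1 < p) (hω0 : 0 < ω) (hω1 : ω < (K : ℝ) ^ 2 / γ ^ 2)
    (b : ℝ) (hb : b = arctanh (|γ| * Real.sqrt ω / (K : ℝ)))
    (φ : ℝ → ℝ)
    (hφ : ∀ x, φ x = ((p + 1) * ω / 2) ^ (1 / (p - 1)) *
      (Real.sinh ((p - 1) * Real.sqrt ω / 2 * x + b)) ^ (-2 / (p - 1))) :
    0 < b ∧ (K : ℝ) * φ 0 = γ * deriv φ 0 ∧
      (∑ _k : Fin K, φ 0) = γ * deriv φ 0 := by
  have hlt : |γ| * √ω < K := abs_mul_sqrt_lt_of_lt_div_sq hω0.le K.cast_nonneg hω1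
  have hγω : 0 < |γ| * √ω := mul_pos (abs_pos.2 hγ.ne) (sqrt_pos.2 hω0)
  have hK : (0 : ℝ) < K := hγω.trans hlt
  set t := |γ| * √ω / K with ht_def
  have ht : t ∈ Set.Ioo 0 1 := ⟨by positivity, (div_lt_one hK).2 hlt⟩
  have hbt : b = artanh t := hb.trans (arctanh_eq_artanh_s6 ⟨by linarith [ht.1], ht.2.le⟩)
  have hb0 : 0 < b := hbt ▸ artanh_pos ht
  have hcoth : cosh b / sinh b = t⁻¹ := by
    rw [← tanh_artanh (Set.Ioo_subset_Ioo_left (by norm_num) ht), ← hbt, tanh_eq_sinh_div_cosh,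
      inv_div]
  have hderiv : deriv φ 0 = -√ω * t⁻¹ * φ 0 := by
    have hsinh : 0 < sinh ((p - 1) * √ω / 2 * 0 + b) := by simpa using sinh_pos_iff.2 hb0
    rw [funext hφ, (hasDerivAt_const_mul_sinh_rpow _ _ _ _ _ hsinh).deriv]
    simp only [mul_zero, zero_add, hcoth]
    field_simp [(by linarith : p - 1 ≠ 0)]
  have key : (K : ℝ) * φ 0 = γ * deriv φ 0 := by
    rw [hderiv, ht_def, abs_of_neg hγ]
    field_simp [hγ.ne]
  exact ⟨hb0, key, by simpa using key⟩

/-- With `b_ω = arctanh(|γ|√ω/K)`, the explicit profile satisfies the δ′-type vertex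
condition on the star graph with `K` edges: `K φ(0) = γ φ′(0)`, hence the symmetric
`K`-tuple `(φ, …, φ)` has a common vertex derivative and the sum of its vertex values
equals `γ` times that common derivative. -/
theorem deltaPrime_vertex_condition (K : ℕ) (hK : 1 ≤ K) (γ p ω : ℝ)
    (hγ : γ < 0) (hp : 1 < p) (hω0 : 0 < ω) (hω1 : ω < (K : ℝ) ^ 2 / γ ^ 2)
    (b : ℝ) (hb : b = arctanh (|γ| * Real.sqrt ω / (K : ℝ)))
    (φ : ℝ → ℝ)
    (hφ : ∀ x, φ x = ((p + 1) * ω / 2) ^ (1 / (p - 1)) *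
      (Real.sinh ((p - 1) * Real.sqrt ω / 2 * x + b)) ^ (-2 / (p - 1))) :
    0 < b ∧ (K : ℝ) * φ 0 = γ * deriv φ 0 ∧
      (∑ _k : Fin K, φ 0) = γ * deriv φ 0 :=
  deltaPrime_vertex_condition_general K γ p ω hγ hp hω0 hω1 b hb φ hφ
end

section
/- Let p > 1 and ω > 0. Let u : [0,∞) → ℝ be continuous on [0,∞), twice continuously differentiable on (0,∞), strictly positive on [0,∞), satisfy u″(x) = ω u(x) + u(x)^p for every x > 0, and satisfy u(x) → 0 as x → ∞. Then there exists b > 0 such that u(x) = ((p+1)ω/2)^{1/(p−1)} (sinh(((p−1)√ω/2)x + b))^{−2/(p−1)} for every x ≥ 0. -/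
/-!
Since `u'' = ωu + u^p > 0`, `u'` is increasing; as `u → 0`, this forces `u' → 0` and `u' < 0`.
The energy `u'² - ωu² - 2/(p+1) u^(p+1)` is conserved and vanishes at infinity, which gives the
first-order equation `u' = -u √(ω + 2/(p+1) u^(p-1))`. With `C = ((p+1)ω/2)^(1/(p-1))` the
substitution `A = (C/u)^((p-1)/2)` turns it into `A' = (p-1)√ω/2 · √(1 + A²)`, so `arsinh A` is
affine with slope `(p-1)√ω/2`; solving for `u` gives the `sinh` profile.
-/

open Real Set Filter Topology

section HalfLine

variable {f f' : ℝ → ℝ} {a : ℝ}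

theorem eq_add_mul_sub_of_hasDerivAt_const {c : ℝ} (hf : ContinuousOn f (Ici a))
    (hd : ∀ x ∈ Ioi a, HasDerivAt f c x) {x : ℝ} (hx : a ≤ x) : f x = f a + c * (x - a) := by
  rcases hx.eq_or_lt with rfl | hax
  · simp
  obtain ⟨ξ, -, hslope⟩ := exists_hasDerivAt_eq_slope f (fun _ ↦ c) hax
    (hf.mono Icc_subset_Ici_self) fun y hy ↦ hd y hy.1
  rw [eq_div_iff (sub_ne_zero.2 hax.ne')] at hslope
  linarith

theorem eq_of_hasDerivAt_zero_of_tendsto {l : ℝ} (hd : ∀ x ∈ Ioi a, HasDerivAt f 0 x)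
    (hf : Tendsto f atTop (𝓝 l)) {x : ℝ} (hx : a < x) : f x = l := by
  have hconst : ∀ y ∈ Ici x, f y = f x := fun y hy ↦ by
    simpa using eq_add_mul_sub_of_hasDerivAt_const
      (fun z hz ↦ (hd z (hx.trans_le hz)).continuousAt.continuousWithinAt)
      (fun z hz ↦ hd z (hx.trans hz)) hy
  exact tendsto_nhds_unique (tendsto_const_nhds.congr' <|
    (eventually_ge_atTop x).mono fun y hy ↦ (hconst y hy).symm) hf

theorem tendsto_atTop_of_hasDerivAt_of_pos_le {c : ℝ} (hc : 0 < c)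
    (hd : ∀ x ∈ Ici a, HasDerivAt f (f' x) x) (hle : ∀ x ∈ Ici a, c ≤ f' x) :
    Tendsto f atTop atTop := by
  have hlin : ∀ x ∈ Ici a, f a + c * (x - a) ≤ f x := by
    intro x hx
    rcases (show a ≤ x from hx).eq_or_lt with rfl | hax
    · simp
    obtain ⟨ξ, hξ, hslope⟩ := exists_hasDerivAt_eq_slope f f' hax
      (fun y hy ↦ (hd y hy.1).continuousAt.continuousWithinAt) fun y hy ↦ hd y (le_of_lt hy.1)
    rw [eq_div_iff (sub_ne_zero.2 hax.ne')] at hslope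
    nlinarith [hle ξ (le_of_lt hξ.1)]
  refine tendsto_atTop_mono' _ (eventually_ge_atTop a |>.mono hlin) ?_
  exact tendsto_atTop_add_const_left _ _
    ((tendsto_atTop_add_const_right _ (-a) tendsto_id).const_mul_atTop hc)

theorem tendsto_deriv_zero_of_tendsto_of_monotoneOn {l : ℝ} (hf : Tendsto f atTop (𝓝 l))
    (hd : ∀ x ∈ Ioi a, HasDerivAt f (f' x) x) (hmono : MonotoneOn f' (Ioi a)) :
    Tendsto f' atTop (𝓝 0) := by
  have hnonpos : ∀ x ∈ Ioi a, f' x ≤ 0 := by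
    intro x hx
    by_contra! hpos
    have hmem : ∀ y ∈ Ici x, y ∈ Ioi a := fun y hy ↦ mem_Ioi.2 (hx.trans_le hy)
    exact not_tendsto_nhds_of_tendsto_atTop (tendsto_atTop_of_hasDerivAt_of_pos_le hpos
      (fun y hy ↦ hd y (hmem y hy)) fun y hy ↦ hmono hx (hmem y hy) hy) l hf
  -- otherwise `f' ≤ -ε` on all of `(a, ∞)` by monotonicity, and `-f` would grow linearly
  have hlarge : ∀ ε > 0, ∃ x ∈ Ioi a, -ε < f' x := by
    intro ε hε
    by_contra! hle
    exact not_tendsto_nhds_of_tendsto_atTop (tendsto_atTop_of_hasDerivAt_of_pos_le (a := a + 1)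
      hε (fun y hy ↦ (hd y (by simp at hy ⊢; linarith)).neg)
      fun y hy ↦ by linarith [hle y (by simp at hy ⊢; linarith)]) (-l) hf.neg
  refine tendsto_order.2 ⟨fun b hb ↦ ?_, fun b hb ↦ ?_⟩
  · obtain ⟨x, hx, hbx⟩ := hlarge (-b) (neg_pos.2 hb)
    filter_upwards [eventually_ge_atTop x] with y hy
    linarith [hmono hx (mem_Ioi.2 (lt_of_lt_of_le hx hy)) hy]
  · filter_upwards [eventually_gt_atTop a] with y hy
    linarith [hnonpos y hy]

theorem StrictMonoOn.lt_of_tendsto_Ioi {l : ℝ} (hmono : StrictMonoOn f (Ioi a))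
    (hf : Tendsto f atTop (𝓝 l)) {x : ℝ} (hx : a < x) : f x < l := by
  have hx1 : a < x + 1 := by linarith
  refine (hmono hx hx1 (lt_add_one x)).trans_le (ge_of_tendsto hf ?_)
  filter_upwards [eventually_ge_atTop (x + 1)] with y hy
  exact hmono.monotoneOn hx1 (hx1.trans_le hy) hy

end HalfLine

section StationaryNLS

variable {p ω : ℝ} {u u' u'' : ℝ → ℝ} {x : ℝ}

noncomputable def nlsEnergy (p ω : ℝ) (u u' : ℝ → ℝ) (x : ℝ) : ℝ :=
  u' x ^ 2 - ω * u x ^ 2 - 2 / (p + 1) * u x ^ (p + 1)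

theorem hasDerivAt_nlsEnergy (hp : p + 1 ≠ 0) (hu : HasDerivAt u (u' x) x)
    (hu' : HasDerivAt u' (u'' x) x) (hx : u x ≠ 0) :
    HasDerivAt (nlsEnergy p ω u u') (2 * u' x * (u'' x - ω * u x - u x ^ p)) x := by
  refine (((hu'.pow 2).sub ((hu.pow 2).const_mul ω)).sub
    ((hu.rpow_const (p := p + 1) (Or.inl hx)).const_mul (2 / (p + 1)))).congr_deriv ?_
  rw [add_sub_cancel_right]
  field_simp
  ring

theorem tendsto_nlsEnergy (hp : 0 < p + 1) (hu : Tendsto u atTop (𝓝 0))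
    (hu' : Tendsto u' atTop (𝓝 0)) : Tendsto (nlsEnergy p ω u u') atTop (𝓝 0) := by
  have hpow : Tendsto (fun x ↦ u x ^ (p + 1)) atTop (𝓝 0) := by
    have h := (continuousAt_rpow_const 0 (p + 1) (Or.inr hp.le)).tendsto.comp hu
    rwa [zero_rpow hp.ne'] at h
  rw [show (0 : ℝ) = 0 ^ 2 - ω * 0 ^ 2 - 2 / (p + 1) * 0 by ring]
  exact ((hu'.pow 2).sub ((hu.pow 2).const_mul ω)).sub (hpow.const_mul (2 / (p + 1)))

theorem eq_neg_mul_sqrt_of_nlsEnergy_eq_zero (hE : nlsEnergy p ω u u' x = 0) (hux : 0 < u x)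
    (hu'x : u' x < 0) : u' x = -(u x * √(ω + 2 / (p + 1) * u x ^ (p - 1))) := by
  have hsplit : u x ^ (p + 1) = u x ^ 2 * u x ^ (p - 1) := by
    rw [← rpow_natCast, ← rpow_add hux]
    ring_nf
  have hsq : u' x ^ 2 = u x ^ 2 * (ω + 2 / (p + 1) * u x ^ (p - 1)) := by
    rw [nlsEnergy, hsplit] at hE
    linear_combination hE
  have habs : u' x = -|u' x| := by rw [abs_of_neg hu'x, neg_neg]
  rw [habs, ← sqrt_sq_eq_abs, hsq, sqrt_mul (sq_nonneg _), sqrt_sq hux.le]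

theorem HasDerivAt.rpow_div_of_eq_neg_mul {c s g : ℝ} (hc : 0 < c) (hux : 0 < u x)
    (hu : HasDerivAt u (-(u x * g)) x) :
    HasDerivAt (fun t ↦ (c / u t) ^ s) (s * (c / u x) ^ s * g) x := by
  have hcu : 0 < c / u x := div_pos hc hux
  convert ((hu.inv hux.ne').const_mul c).rpow_const (p := s) (Or.inl hcu.ne') using 1
  · simp [div_eq_mul_inv]
  · simp only [Pi.inv_apply, ← div_eq_mul_inv]
    rw [rpow_sub_one hcu.ne']
    field_simp

theorem rpow_div_mul_sqrt_eq (hp : 1 < p) (hω : 0 < ω) (hux : 0 < u x) :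
    (((p + 1) * ω / 2) ^ (1 / (p - 1)) / u x) ^ ((p - 1) / 2) *
        √(ω + 2 / (p + 1) * u x ^ (p - 1)) =
      √ω * √(1 + ((((p + 1) * ω / 2) ^ (1 / (p - 1)) / u x) ^ ((p - 1) / 2)) ^ 2) := by
  set C := ((p + 1) * ω / 2) ^ (1 / (p - 1))
  set A := (C / u x) ^ ((p - 1) / 2)
  have hCu : 0 < C / u x := div_pos (rpow_pos_of_pos (by positivity) _) hux
  have hA2 : A ^ 2 * u x ^ (p - 1) = (p + 1) * ω / 2 := by
    rw [← rpow_natCast, ← rpow_mul hCu.le, Nat.cast_ofNat, div_mul_cancel₀ _ two_ne_zero,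
      ← mul_rpow hCu.le hux.le, div_mul_cancel₀ _ hux.ne', ← rpow_mul (by positivity)]
    convert rpow_one _ using 2
    field_simp [sub_ne_zero.2 hp.ne']
  have hsq : (A * √(ω + 2 / (p + 1) * u x ^ (p - 1))) ^ 2 = ω * (1 + A ^ 2) := by
    rw [mul_pow, sq_sqrt (by positivity)]
    field_simp
    linear_combination (2 : ℝ) * hA2
  rw [← sqrt_mul hω.le, ← hsq, sqrt_sq (by positivity)]

theorem hasDerivAt_arsinh_rpow_div (hp : 1 < p) (hω : 0 < ω) (hux : 0 < u x)
    (hu : HasDerivAt u (-(u x * √(ω + 2 / (p + 1) * u x ^ (p - 1)))) x) :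
    HasDerivAt (fun t ↦ arsinh ((((p + 1) * ω / 2) ^ (1 / (p - 1)) / u t) ^ ((p - 1) / 2)))
      ((p - 1) * √ω / 2) x := by
  have hC : 0 < ((p + 1) * ω / 2) ^ (1 / (p - 1)) := rpow_pos_of_pos (by positivity) _
  refine ((hasDerivAt_arsinh _).comp x
    (hu.rpow_div_of_eq_neg_mul (s := (p - 1) / 2) hC hux)).congr_deriv ?_
  rw [mul_assoc, rpow_div_mul_sqrt_eq hp hω hux]
  field_simp

theorem eq_mul_sinh_rpow_of_arsinh_rpow_div_eq {c v y : ℝ} (hp : p ≠ 1) (hc : 0 < c) (hv : 0 < v)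
    (h : arsinh ((c / v) ^ ((p - 1) / 2)) = y) : v = c * sinh y ^ (-2 / (p - 1)) := by
  have hcv : 0 < c / v := div_pos hc hv
  rw [← h, sinh_arsinh, ← rpow_mul hcv.le]
  have : (p - 1) / 2 * (-2 / (p - 1)) = -1 := by
    field_simp [sub_ne_zero.2 hp]
  rw [this, rpow_neg_one, inv_div]
  field_simp

end StationaryNLS

theorem classification_positive_decaying_general (p ω : ℝ) (hp : 1 < p) (hω : 0 < ω)
    (u u' u'' : ℝ → ℝ)
    (hcont : ContinuousOn u (Set.Ici 0))
    (hd1 : ∀ x ∈ Set.Ioi (0:ℝ), HasDerivAt u (u' x) x)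
    (hd2 : ∀ x ∈ Set.Ioi (0:ℝ), HasDerivAt u' (u'' x) x)
    (hpos : ∀ x ≥ (0:ℝ), 0 < u x)
    (hode : ∀ x ∈ Set.Ioi (0:ℝ), u'' x = ω * u x + u x ^ p)
    (hdecay : Filter.Tendsto u Filter.atTop (nhds 0)) :
    ∃ b > (0:ℝ), ∀ x ≥ (0:ℝ),
      u x = ((p + 1) * ω / 2) ^ (1 / (p - 1)) *
        (Real.sinh ((p - 1) * Real.sqrt ω / 2 * x + b)) ^ (-2 / (p - 1)) := by
  set C := ((p + 1) * ω / 2) ^ (1 / (p - 1))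
  have hC : 0 < C := rpow_pos_of_pos (by positivity) _
  have hu'mono : StrictMonoOn u' (Ioi 0) :=
    strictMonoOn_of_hasDerivWithinAt_pos (convex_Ioi 0)
      (fun x hx ↦ (hd2 x hx).continuousAt.continuousWithinAt)
      (fun x hx ↦ (hd2 x (interior_subset hx)).hasDerivWithinAt) fun x hx ↦ by
        have hux := hpos x (le_of_lt (interior_subset hx : x ∈ Ioi 0))
        rw [hode x (interior_subset hx)]
        positivity
  have hu'lim : Tendsto u' atTop (𝓝 0) :=
    tendsto_deriv_zero_of_tendsto_of_monotoneOn hdecay hd1 hu'mono.monotoneOn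
  have hE : ∀ x ∈ Ioi (0 : ℝ), nlsEnergy p ω u u' x = 0 := fun x hx ↦
    eq_of_hasDerivAt_zero_of_tendsto (fun y hy ↦ by
      simpa [hode y hy] using hasDerivAt_nlsEnergy (p := p) (ω := ω) (by linarith)
        (hd1 y hy) (hd2 y hy) (hpos y (le_of_lt hy)).ne')
      (tendsto_nlsEnergy (by linarith) hdecay hu'lim) hx
  have hfirst : ∀ x ∈ Ioi (0 : ℝ), u' x = -(u x * √(ω + 2 / (p + 1) * u x ^ (p - 1))) :=
    fun x hx ↦ eq_neg_mul_sqrt_of_nlsEnergy_eq_zero (hE x hx) (hpos x (le_of_lt hx))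
      (hu'mono.lt_of_tendsto_Ioi hu'lim hx)
  have harsinh : ∀ x ∈ Ioi (0 : ℝ),
      HasDerivAt (fun t ↦ arsinh ((C / u t) ^ ((p - 1) / 2))) ((p - 1) * √ω / 2) x :=
    fun x hx ↦ hasDerivAt_arsinh_rpow_div hp hω (hpos x (le_of_lt hx)) (hfirst x hx ▸ hd1 x hx)
  refine ⟨arsinh ((C / u 0) ^ ((p - 1) / 2)),
    arsinh_pos_iff.2 (rpow_pos_of_pos (div_pos hC (hpos 0 le_rfl)) _), fun x hx ↦ ?_⟩
  refine eq_mul_sinh_rpow_of_arsinh_rpow_div_eq hp.ne' hC (hpos x hx) ?_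
  rw [eq_add_mul_sub_of_hasDerivAt_const ?_ harsinh hx]
  · ring
  · exact continuous_arsinh.comp_continuousOn <|
      (continuousOn_const.div hcont fun t ht ↦ (hpos t ht).ne').rpow_const fun t ht ↦
        Or.inl (div_pos hC (hpos t ht)).ne'

/-- Classification of positive decaying solutions of the stationary defocusing NLS
`-u″ + ωu + u^p = 0` on the half-line: any positive `C²` solution tending to `0` at
infinity equals the explicit `sinh`-profile for some shift `b > 0`. -/
theorem classification_positive_decaying (p ω : ℝ) (hp : 1 < p) (hω : 0 < ω)
    (u u' u'' : ℝ → ℝ)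
    (hcont : ContinuousOn u (Set.Ici 0))
    (hd1 : ∀ x ∈ Set.Ioi (0:ℝ), HasDerivAt u (u' x) x)
    (hd2 : ∀ x ∈ Set.Ioi (0:ℝ), HasDerivAt u' (u'' x) x)
    (hc2 : ContinuousOn u'' (Set.Ioi 0))
    (hpos : ∀ x ≥ (0:ℝ), 0 < u x)
    (hode : ∀ x ∈ Set.Ioi (0:ℝ), u'' x = ω * u x + u x ^ p)
    (hdecay : Filter.Tendsto u Filter.atTop (nhds 0)) :
    ∃ b > (0:ℝ), ∀ x ≥ (0:ℝ),
      u x = ((p + 1) * ω / 2) ^ (1 / (p - 1)) *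
        (Real.sinh ((p - 1) * Real.sqrt ω / 2 * x + b)) ^ (-2 / (p - 1)) :=
  classification_positive_decaying_general p ω hp hω u u' u'' hcont hd1 hd2 hpos hode hdecay
end

section
/- Let p > 1, b > 0, and define φ : [0,∞) → ℝ by φ(x) = (((p−1)/√(2(p+1)))·x + b)^{−2/(p−1)}. Then φ is positive and twice differentiable on [0,∞) and satisfies φ″(x) = φ(x)^p for every x > 0 (that is, −φ″ + φ^p = 0 on (0,∞)). Moreover, for any integer K ≥ 1 and any γ < 0, choosing b = (K/|γ|)·√(2/(p+1)) yields K·φ′(0) = γ·φ(0), so that the symmetric K-tuple (φ, …, φ) satisfies the δ-type vertex conditions on the star graph with K edges and coupling strength γ. -/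
/-!
Write `φ = (c x + b)^α` with `c = (p-1)/√(2(p+1))` and `α = -2/(p-1)`. Then
`φ″ = c²α(α-1) (c x + b)^(α-2)`, and the two identities `c²α(α-1) = 1`, `αp = α - 2` turn this
into `φ^p`. At the vertex `φ'(0)/φ(0) = cα/b = -√(2/(p+1))/b`, which the choice of `b` makes
equal to `γ/K`.
-/

open Real

theorem hasDerivAt_affine_rpow {c b α x : ℝ} (h : c * x + b ≠ 0) :
    HasDerivAt (fun y => (c * y + b) ^ α) (c * α * (c * x + b) ^ (α - 1)) x := by
  have hlin : HasDerivAt (fun y : ℝ => c * y + b) c x := by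
    simpa using ((hasDerivAt_id x).const_mul c).add_const b
  exact hlin.rpow_const (Or.inl h)

namespace PowerProfile

noncomputable def slope (p : ℝ) : ℝ := (p - 1) / √(2 * (p + 1))

noncomputable def exponent (p : ℝ) : ℝ := -2 / (p - 1)

theorem slope_pos {p : ℝ} (hp : 1 < p) : 0 < slope p :=
  div_pos (by linarith) (sqrt_pos.mpr (by linarith))

theorem exponent_mul {p : ℝ} (hp : p ≠ 1) : exponent p * p = exponent p - 1 - 1 := by
  have : p - 1 ≠ 0 := sub_ne_zero.mpr hp
  unfold exponent
  field_simp
  ring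

theorem slope_mul_exponent {p : ℝ} (hp : 1 < p) : slope p * exponent p = -√(2 / (p + 1)) := by
  have hp1 : p - 1 ≠ 0 := by linarith
  have hsqrt : √(2 * (p + 1)) * √(2 / (p + 1)) = 2 := by
    rw [← sqrt_mul (by linarith), show 2 * (p + 1) * (2 / (p + 1)) = 2 ^ 2 by
      field_simp, sqrt_sq zero_le_two]
  have hs : √(2 * (p + 1)) ≠ 0 := (sqrt_pos.mpr (by linarith)).ne'
  unfold slope exponent
  field_simp
  linear_combination hsqrt

theorem slope_sq_mul_exponent_mul_exponent_sub_one {p : ℝ} (hp : 1 < p) :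
    slope p * exponent p * (slope p * (exponent p - 1)) = 1 := by
  have hs : √(2 * (p + 1)) ^ 2 = 2 * (p + 1) := sq_sqrt (by linarith)
  have hp1 : p - 1 ≠ 0 := by linarith
  have hs0 : √(2 * (p + 1)) ≠ 0 := (sqrt_pos.mpr (by linarith)).ne'
  unfold slope exponent
  field_simp
  linear_combination -hs

theorem second_derivative_eq_rpow {p y : ℝ} (hp : 1 < p) (hy : 0 < y) :
    slope p * exponent p * (slope p * (exponent p - 1) * y ^ (exponent p - 1 - 1)) =
      (y ^ exponent p) ^ p := by
  rw [← rpow_mul hy.le, exponent_mul hp.ne', ← mul_assoc,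
    slope_sq_mul_exponent_mul_exponent_sub_one hp, one_mul]

theorem vertex_condition {p b γ K : ℝ} (hp : 1 < p) (hb : 0 < b) (hγ : γ < 0)
    (hbγ : b = K / |γ| * √(2 / (p + 1))) :
    K * (slope p * exponent p * b ^ (exponent p - 1)) = γ * b ^ exponent p := by
  have hK : K * √(2 / (p + 1)) = -γ * b := by
    rw [hbγ, abs_of_neg hγ]
    field_simp [hγ.ne]
  rw [rpow_sub_one hb.ne', slope_mul_exponent hp]
  field_simp
  linear_combination -hK

end PowerProfile

/-- For `ω = 0`, the power profile `φ(x) = ((p-1)/√(2(p+1)) x + b)^{-2/(p-1)}` is positive,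
twice differentiable on `[0,∞)`, solves `φ″ = φ^p` on `(0,∞)`, and for
`b = (K/|γ|)√(2/(p+1))` the symmetric `K`-tuple satisfies the δ-type vertex conditions. -/
theorem power_profile_solves (p b : ℝ) (hp : 1 < p) (hb : 0 < b)
    (φ : ℝ → ℝ)
    (hφ : ∀ x, φ x = ((p - 1) / Real.sqrt (2 * (p + 1)) * x + b) ^ (-2 / (p - 1))) :
    (∀ x ≥ (0:ℝ), 0 < φ x) ∧
    (∃ φ' φ'' : ℝ → ℝ,
      (∀ x ≥ (0:ℝ), HasDerivAt φ (φ' x) x) ∧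
      (∀ x ≥ (0:ℝ), HasDerivAt φ' (φ'' x) x) ∧
      (∀ x > (0:ℝ), φ'' x = φ x ^ p)) ∧
    (∀ K : ℕ, 1 ≤ K → ∀ γ : ℝ, γ < 0 →
      b = ((K : ℝ) / |γ|) * Real.sqrt (2 / (p + 1)) →
      (K : ℝ) * deriv φ 0 = γ * φ 0 ∧ (∑ _k : Fin K, deriv φ 0) = γ * φ 0) := by
  open PowerProfile in
  have hφ' : φ = fun x => (slope p * x + b) ^ exponent p := funext hφ
  subst hφ'
  have hbase : ∀ x ≥ (0:ℝ), 0 < slope p * x + b := fun x hx => by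
    have := mul_nonneg (slope_pos hp).le hx
    linarith
  refine ⟨fun x hx => rpow_pos_of_pos (hbase x hx) _,
    ⟨_, _, fun x hx => hasDerivAt_affine_rpow (hbase x hx).ne',
      fun x hx => (hasDerivAt_affine_rpow (hbase x hx).ne').const_mul _,
      fun x hx => second_derivative_eq_rpow hp (hbase x hx.le)⟩, ?_⟩
  intro K _ γ hγ hbγ
  have hvertex : (K : ℝ) * deriv (fun x => (slope p * x + b) ^ exponent p) 0 =
      γ * (slope p * 0 + b) ^ exponent p := by
    rw [(hasDerivAt_affine_rpow (hbase 0 le_rfl).ne').deriv, mul_zero, zero_add]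
    exact vertex_condition hp hb hγ hbγ
  refine ⟨hvertex, ?_⟩
  simpa using hvertex
end

section
/- Let p ≥ 5 and let u : [0,∞) → ℝ be continuous on [0,∞) and twice continuously differentiable on (0,∞), satisfy u″(x) = |u(x)|^{p−1} u(x) for every x > 0, and be such that u and u′ are square-integrable on (0,∞). Then u(x) = 0 for every x ≥ 0. -/
/-!
Multiplying the equation by `u'` shows that the energy `u'^2 / 2 - |u|^(p+1) / (p+1)` is constant
on the half-line. Since `u^2` and its derivative `2 u u'` are integrable, `u → 0` at infinity, and
since `u'^2` is integrable the energy is zero. The product `u u'` has derivative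
`u'^2 + |u|^(p+1) ≥ 0` and is integrable, so it is nonpositive; together with the energy identity
this makes `v = u^2` a solution of `v' = -k v^q` with `q = (p+3)/4`. If `v` were positive somewhere,
it would stay positive and `v^(1-q)` would grow linearly, so `v ≳ x^(-4/(p-1))`, which is not
integrable when `p ≥ 5`.
-/

open MeasureTheory Set Filter Topology

theorem eq_zero_of_tendsto_of_integrableOn_Ioi {f : ℝ → ℝ} {a l : ℝ}
    (hf : IntegrableOn f (Ioi a)) (hl : Tendsto f atTop (𝓝 l)) : l = 0 := by
  refine IntegrableAtFilter.eq_zero_of_tendsto ⟨Ioi a, Ioi_mem_atTop a, hf⟩ (fun s hs => ?_) hl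
  obtain ⟨b, hb⟩ := mem_atTop_sets.1 hs
  exact top_le_iff.1 (Real.volume_Ici (a := b) ▸ measure_mono hb)

theorem MonotoneOn.nonpos_of_integrableOn_Ioi {f : ℝ → ℝ} {a x : ℝ}
    (hmono : MonotoneOn f (Ioi a)) (hf : IntegrableOn f (Ioi a)) (hx : x ∈ Ioi a) :
    f x ≤ 0 := by
  by_contra! hpos
  have hconst : IntegrableOn (fun _ => f x) (Ioi x) := by
    refine (hf.mono_set (Ioi_subset_Ioi (le_of_lt hx))).mono' aestronglyMeasurable_const ?_
    refine (ae_restrict_iff' measurableSet_Ioi).2 (ae_of_all _ fun y hy => ?_)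
    rw [Real.norm_of_nonneg hpos.le]
    exact hmono hx (hx.out.trans hy) (le_of_lt hy)
  simp [integrableOn_const_iff, hpos.ne'] at hconst

theorem pos_of_hasDerivAt_of_neg_mul_le {v v' : ℝ → ℝ} {a K : ℝ}
    (hv : ∀ x ∈ Ici a, HasDerivAt v (v' x) x) (hle : ∀ x ∈ Ici a, -K * v x ≤ v' x)
    (ha : 0 < v a) {x : ℝ} (hx : x ∈ Ici a) : 0 < v x := by
  have hderiv : ∀ y ∈ Ici a, HasDerivAt (fun y => v y * Real.exp (K * y))
      ((v' y + K * v y) * Real.exp (K * y)) y := fun y hy =>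
    ((hv y hy).mul ((hasDerivAt_id' y).const_mul K).exp).congr_deriv (by ring)
  have hmono : MonotoneOn (fun y => v y * Real.exp (K * y)) (Ici a) := by
    refine monotoneOn_of_hasDerivWithinAt_nonneg (convex_Ici a)
      (fun y hy => (hderiv y hy).continuousAt.continuousWithinAt)
      (fun y hy => (hderiv y (interior_subset hy)).hasDerivWithinAt) (fun y hy => ?_)
    have := hle y (interior_subset hy)
    exact mul_nonneg (by linarith) (Real.exp_pos _).le
  have hgrow : v a * Real.exp (K * a) ≤ v x * Real.exp (K * x) := hmono self_mem_Ici hx hx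
  exact pos_of_mul_pos_left ((mul_pos ha (Real.exp_pos _)).trans_le hgrow) (Real.exp_pos _).le

theorem not_integrableOn_Ioi_of_rpow_neg_le {v : ℝ → ℝ} {a A B β : ℝ} (hβ : 1 ≤ β)
    (hv : ∀ x ∈ Ioi a, 0 < v x) (hle : ∀ x ∈ Ioi a, v x ^ (-β) ≤ A + B * x) :
    ¬ IntegrableOn v (Ioi a) := by
  intro hint
  set C : ℝ := |A| + |B| + 1
  have hC1 : 1 ≤ C := by linarith [abs_nonneg A, abs_nonneg B]
  have hinv : ∀ x ∈ Ioi (max a 1), x⁻¹ ≤ C * v x := by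
    intro x hx
    have hxa : x ∈ Ioi a := (le_max_left a 1).trans_lt hx
    have hx1 : 1 ≤ x := (le_max_right a 1).trans hx.out.le
    have hCx : 1 ≤ C * x := one_le_mul_of_one_le_of_one_le hC1 hx1
    have hpow : (v x)⁻¹ ^ β ≤ (C * x) ^ β := calc
      (v x)⁻¹ ^ β = v x ^ (-β) := by rw [Real.inv_rpow (hv x hxa).le, Real.rpow_neg (hv x hxa).le]
      _ ≤ A + B * x := hle x hxa
      _ ≤ C * x := by nlinarith [le_abs_self A, le_abs_self B, abs_nonneg A, abs_nonneg B]
      _ = (C * x) ^ (1 : ℝ) := (Real.rpow_one _).symm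
      _ ≤ (C * x) ^ β := Real.rpow_le_rpow_of_exponent_le hCx hβ
    have hlow : (C * x)⁻¹ ≤ v x := by
      rw [Real.rpow_le_rpow_iff (inv_nonneg.2 (hv x hxa).le) (by positivity) (by linarith)] at hpow
      exact (inv_le_comm₀ (hv x hxa) (by positivity)).1 hpow
    calc x⁻¹ = C * (C * x)⁻¹ := by field_simp
      _ ≤ C * v x := by gcongr
  refine not_integrableOn_Ioi_inv
    (((hint.mono_set (Ioi_subset_Ioi (le_max_left a 1))).const_mul C).mono'
      measurable_inv.aestronglyMeasurable
      ((ae_restrict_iff' measurableSet_Ioi).2 (ae_of_all _ fun x hx => ?_)))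
  have hx0 : 0 < x := zero_lt_one.trans_le ((le_max_right a 1).trans hx.out.le)
  rw [Real.norm_of_nonneg (inv_nonneg.2 hx0.le)]
  exact hinv x hx

theorem eq_zero_of_hasDerivAt_neg_mul_rpow {v : ℝ → ℝ} {a k q : ℝ} (hk : 0 ≤ k) (hq : 2 ≤ q)
    (hv : ∀ x, 0 ≤ v x) (hderiv : ∀ x ∈ Ici a, HasDerivAt v (-(k * v x ^ q)) x)
    (hint : IntegrableOn v (Ioi a)) : v a = 0 := by
  by_contra hne
  have ha : 0 < v a := (hv a).lt_of_ne' hne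
  have hanti : AntitoneOn v (Ici a) :=
    antitoneOn_of_hasDerivWithinAt_nonpos (convex_Ici a)
      (fun y hy => (hderiv y hy).continuousAt.continuousWithinAt)
      (fun y hy => (hderiv y (interior_subset hy)).hasDerivWithinAt)
      (fun y _ => neg_nonpos.2 (mul_nonneg hk (Real.rpow_nonneg (hv y) q)))
  have hpos : ∀ x ∈ Ici a, 0 < v x := fun x hx => by
    refine pos_of_hasDerivAt_of_neg_mul_le (K := k * v a ^ (q - 1)) hderiv (fun y hy => ?_) ha hx
    have hsplit : v y ^ q = v y ^ (q - 1) * v y := by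
      conv_lhs => rw [show q = (q - 1) + 1 by ring]
      rw [Real.rpow_add' (hv y) (by linarith), Real.rpow_one]
    have hmono : v y ^ (q - 1) ≤ v a ^ (q - 1) :=
      Real.rpow_le_rpow (hv y) (hanti self_mem_Ici hy hy) (by linarith)
    rw [hsplit]
    nlinarith [mul_le_mul_of_nonneg_right hmono (mul_nonneg hk (hv y))]
  have hslope : ∀ y ∈ Ici a, HasDerivAt (fun y => v y ^ (1 - q) - (q - 1) * k * y) 0 y := by
    intro y hy
    have hcancel : v y ^ (1 - q - 1) * v y ^ q = 1 := by
      rw [← Real.rpow_add (hpos y hy)]; norm_num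
    refine (((hderiv y hy).rpow_const (Or.inl (hpos y hy).ne')).sub
      ((hasDerivAt_id' y).const_mul ((q - 1) * k))).congr_deriv ?_
    linear_combination ((q - 1) * k) * hcancel
  have haffine : ∀ x ∈ Ici a,
      v x ^ (1 - q) - (q - 1) * k * x = v a ^ (1 - q) - (q - 1) * k * a := fun x hx =>
    constant_of_has_deriv_right_zero
      (fun y hy => (hslope y hy.1).continuousAt.continuousWithinAt)
      (fun y hy => (hslope y hy.1).hasDerivWithinAt) x ⟨hx, le_rfl⟩
  refine not_integrableOn_Ioi_of_rpow_neg_le (β := q - 1) (A := v a ^ (1 - q) - (q - 1) * k * a)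
    (B := (q - 1) * k) (by linarith) (fun x hx => hpos x (mem_Ici.2 hx.out.le)) (fun x hx => ?_)
    hint
  rw [neg_sub]
  linarith [haffine x (mem_Ici.2 hx.out.le)]

theorem abs_rpow_eq_sq_rpow (t r : ℝ) : |t| ^ r = (t ^ 2) ^ (r / 2) := by
  rw [← sq_abs, ← Real.rpow_natCast, ← Real.rpow_mul (abs_nonneg t)]
  ring_nf

theorem hasDerivAt_energy {p : ℝ} {u u' u'' : ℝ → ℝ} {x : ℝ} (hp : 0 < p)
    (hu : HasDerivAt u (u' x) x) (hu' : HasDerivAt u' (u'' x) x)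
    (hode : u'' x = |u x| ^ (p - 1) * u x) :
    HasDerivAt (fun y => u' y ^ 2 / 2 - |u y| ^ (p + 1) / (p + 1)) 0 x := by
  refine (((hu'.pow 2).div_const 2).sub
    (((hasDerivAt_abs_rpow (u x) (by linarith)).comp x hu).div_const (p + 1))).congr_deriv ?_
  rw [hode, show p + 1 - 2 = p - 1 by ring]
  field_simp
  ring

theorem hasDerivAt_mul_deriv {p : ℝ} {u u' u'' : ℝ → ℝ} {x : ℝ} (hp : p + 1 ≠ 0)
    (hu : HasDerivAt u (u' x) x) (hu' : HasDerivAt u' (u'' x) x)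
    (hode : u'' x = |u x| ^ (p - 1) * u x) :
    HasDerivAt (fun y => u y * u' y) (u' x ^ 2 + |u x| ^ (p + 1)) x := by
  refine (hu.mul hu').congr_deriv ?_
  rw [hode, show p + 1 = (p - 1) + 2 by ring,
    Real.rpow_add' (abs_nonneg _) (by contrapose! hp; linarith), Real.rpow_two, sq_abs]
  ring

section HalfLine

variable {p a : ℝ} {u u' u'' : ℝ → ℝ}

theorem tendsto_abs_rpow_atTop_zero (hp : 0 < p + 1) (hd1 : ∀ x ∈ Ioi a, HasDerivAt u (u' x) x)
    (hint : IntegrableOn (fun x => u x * u' x) (Ioi a))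
    (hL2 : IntegrableOn (fun x => u x ^ 2) (Ioi a)) :
    Tendsto (fun x => |u x| ^ (p + 1)) atTop (𝓝 0) := by
  have hsq : Tendsto (fun x => u x ^ 2) atTop (𝓝 0) :=
    tendsto_zero_of_hasDerivAt_of_integrableOn_Ioi
      (fun x hx => ((hd1 x hx).pow 2).congr_deriv (by ring)) (hint.const_mul 2) hL2
  have habs : Tendsto (fun x => |u x|) atTop (𝓝 0) := by
    simpa only [Real.sqrt_sq_eq_abs, Real.sqrt_zero] using hsq.sqrt
  simpa only [Real.zero_rpow hp.ne'] using habs.rpow_const (Or.inr hp.le)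

theorem sq_deriv_eq_mul_abs_rpow (hp : 0 < p) (hd1 : ∀ x ∈ Ioi a, HasDerivAt u (u' x) x)
    (hd2 : ∀ x ∈ Ioi a, HasDerivAt u' (u'' x) x)
    (hode : ∀ x ∈ Ioi a, u'' x = |u x| ^ (p - 1) * u x)
    (hint : IntegrableOn (fun x => u x * u' x) (Ioi a))
    (hL2 : IntegrableOn (fun x => u x ^ 2) (Ioi a))
    (hL2' : IntegrableOn (fun x => u' x ^ 2) (Ioi a)) :
    ∀ x ∈ Ioi a, u' x ^ 2 = 2 / (p + 1) * |u x| ^ (p + 1) := by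
  set E := fun y => u' y ^ 2 / 2 - |u y| ^ (p + 1) / (p + 1) with hE
  have hE' : ∀ x ∈ Ioi a, HasDerivAt E 0 x := fun x hx =>
    hasDerivAt_energy hp (hd1 x hx) (hd2 x hx) (hode x hx)
  have hconst : ∀ x ∈ Ioi a, ∀ y ∈ Ioi a, E x = E y := fun x hx y hy =>
    isOpen_Ioi.is_const_of_deriv_eq_zero isPreconnected_Ioi
      (fun z hz => (hE' z hz).differentiableAt.differentiableWithinAt)
      (fun z hz => (hE' z hz).deriv) hx hy
  intro x hx
  have hlim : Tendsto (fun y => u' y ^ 2) atTop (𝓝 (2 * E x)) := by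
    have := (((tendsto_abs_rpow_atTop_zero (by linarith) hd1 hint hL2).div_const (p + 1)).const_mul
      2).const_add (2 * E x)
    rw [zero_div, mul_zero, add_zero] at this
    refine this.congr' ?_
    filter_upwards [Ioi_mem_atTop a] with y hy
    rw [hconst x hx y hy, hE]
    ring
  have hE0 := eq_zero_of_tendsto_of_integrableOn_Ioi hL2' hlim
  rw [hE] at hE0
  field_simp at hE0 ⊢
  linarith

theorem mul_deriv_nonpos (hp : p + 1 ≠ 0) (hd1 : ∀ x ∈ Ioi a, HasDerivAt u (u' x) x)
    (hd2 : ∀ x ∈ Ioi a, HasDerivAt u' (u'' x) x)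
    (hode : ∀ x ∈ Ioi a, u'' x = |u x| ^ (p - 1) * u x)
    (hint : IntegrableOn (fun x => u x * u' x) (Ioi a)) :
    ∀ x ∈ Ioi a, u x * u' x ≤ 0 := by
  have hderiv : ∀ x ∈ Ioi a, HasDerivAt (fun y => u y * u' y) (u' x ^ 2 + |u x| ^ (p + 1)) x :=
    fun x hx => hasDerivAt_mul_deriv hp (hd1 x hx) (hd2 x hx) (hode x hx)
  have hmono : MonotoneOn (fun y => u y * u' y) (Ioi a) :=
    monotoneOn_of_hasDerivWithinAt_nonneg (convex_Ioi a)
      (fun x hx => (hderiv x hx).continuousAt.continuousWithinAt)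
      (fun x hx => (hderiv x (interior_subset hx)).hasDerivWithinAt)
      (fun x _ => by positivity)
  exact fun x hx => hmono.nonpos_of_integrableOn_Ioi hint hx

theorem hasDerivAt_sq_eq_neg_mul_rpow (hp : 0 < p) (hd1 : ∀ x ∈ Ioi a, HasDerivAt u (u' x) x)
    (hd2 : ∀ x ∈ Ioi a, HasDerivAt u' (u'' x) x)
    (hode : ∀ x ∈ Ioi a, u'' x = |u x| ^ (p - 1) * u x)
    (hL2 : IntegrableOn (fun x => u x ^ 2) (Ioi a))
    (hL2' : IntegrableOn (fun x => u' x ^ 2) (Ioi a)) :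
    ∀ x ∈ Ioi a, HasDerivAt (fun y => u y ^ 2)
      (-(2 * √(2 / (p + 1)) * (u x ^ 2) ^ ((p + 3) / 4))) x := by
  have hmeas : ∀ {f : ℝ → ℝ} {f' : ℝ → ℝ}, (∀ x ∈ Ioi a, HasDerivAt f (f' x) x) →
      AEStronglyMeasurable f (volume.restrict (Ioi a)) := fun hf =>
    ContinuousOn.aestronglyMeasurable (fun x hx => (hf x hx).continuousAt.continuousWithinAt)
      measurableSet_Ioi
  have hint : IntegrableOn (fun x => u x * u' x) (Ioi a) :=
    ((memLp_two_iff_integrable_sq (hmeas hd1)).2 hL2).integrable_mul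
      ((memLp_two_iff_integrable_sq (hmeas hd2)).2 hL2')
  intro x hx
  have henergy := sq_deriv_eq_mul_abs_rpow hp hd1 hd2 hode hint hL2 hL2' x hx
  have hsign := mul_deriv_nonpos (by linarith) hd1 hd2 hode hint x hx
  have hsq : (-(u x * u' x)) ^ 2 = (√(2 / (p + 1)) * (u x ^ 2) ^ ((p + 3) / 4)) ^ 2 := by
    rw [neg_sq, mul_pow, henergy, mul_pow, Real.sq_sqrt (by positivity),
      ← Real.rpow_natCast ((u x ^ 2) ^ _) 2, ← Real.rpow_mul (sq_nonneg _), abs_rpow_eq_sq_rpow,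
      show (p + 3) / 4 * ((2 : ℕ) : ℝ) = 1 + (p + 1) / 2 by push_cast; ring,
      Real.rpow_one_add' (sq_nonneg _) (by linarith)]
    ring
  have hmul : u x * u' x = -(√(2 / (p + 1)) * (u x ^ 2) ^ ((p + 3) / 4)) := by
    rw [← (pow_left_inj₀ (neg_nonneg.2 hsign) (by positivity) two_ne_zero).1 hsq, neg_neg]
  exact ((hd1 x hx).pow 2).congr_deriv (by norm_num only [pow_one]; linear_combination 2 * hmul)

end HalfLine

theorem critical_halfline_vanishing_general (p : ℝ) (hp : 5 ≤ p) (u u' u'' : ℝ → ℝ)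
    (hcont : ContinuousOn u (Set.Ici 0))
    (hd1 : ∀ x ∈ Set.Ioi (0:ℝ), HasDerivAt u (u' x) x)
    (hd2 : ∀ x ∈ Set.Ioi (0:ℝ), HasDerivAt u' (u'' x) x)
    (hode : ∀ x ∈ Set.Ioi (0:ℝ), u'' x = |u x| ^ (p - 1) * u x)
    (hL2 : IntegrableOn (fun x => (u x) ^ 2) (Set.Ioi 0))
    (hL2' : IntegrableOn (fun x => (u' x) ^ 2) (Set.Ioi 0)) :
    ∀ x ≥ (0:ℝ), u x = 0 := by
  have hv := hasDerivAt_sq_eq_neg_mul_rpow (by linarith) hd1 hd2 hode hL2 hL2'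
  have hzero : EqOn u 0 (Ioi 0) := fun a ha => pow_eq_zero_iff two_ne_zero |>.1 <|
    eq_zero_of_hasDerivAt_neg_mul_rpow (v := fun y => u y ^ 2) (by positivity) (by linarith)
      (fun y => sq_nonneg (u y)) (fun y hy => hv y (ha.out.trans_le hy))
      (hL2.mono_set (Ioi_subset_Ioi ha.out.le))
  exact fun x hx => hzero.of_subset_closure hcont continuousOn_const Ioi_subset_Ici_self
    (closure_Ioi 0).ge hx

/-- For `p ≥ 5` and `ω = 0`, any `H¹` solution of `u″ = |u|^{p-1} u` on the half-line
vanishes identically. -/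
theorem critical_halfline_vanishing (p : ℝ) (hp : 5 ≤ p) (u u' u'' : ℝ → ℝ)
    (hcont : ContinuousOn u (Set.Ici 0))
    (hd1 : ∀ x ∈ Set.Ioi (0:ℝ), HasDerivAt u (u' x) x)
    (hd2 : ∀ x ∈ Set.Ioi (0:ℝ), HasDerivAt u' (u'' x) x)
    (hc2 : ContinuousOn u'' (Set.Ioi 0))
    (hode : ∀ x ∈ Set.Ioi (0:ℝ), u'' x = |u x| ^ (p - 1) * u x)
    (hL2 : IntegrableOn (fun x => (u x) ^ 2) (Set.Ioi 0))
    (hL2' : IntegrableOn (fun x => (u' x) ^ 2) (Set.Ioi 0)) :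
    ∀ x ≥ (0:ℝ), u x = 0 :=
  critical_halfline_vanishing_general p hp u u' u'' hcont hd1 hd2 hode hL2 hL2'
end

section
/- Fix an integer K ≥ 1, γ < 0, and p ≥ 5. Set ℓ = γ²/K² and, for ω ∈ (0, ℓ), b_ω = arctanh(√(ω/ℓ)) and m(ω) = K ∫₀^∞ (((p+1)ω/2)^{1/(p−1)} (sinh(((p−1)√ω/2)x + b_ω))^{−2/(p−1)})² dx. Then: (i) m(ω) is finite and strictly positive for every ω ∈ (0, ℓ); (ii) m is strictly decreasing on (0, ℓ); (iii) m(ω) → 0 as ω → ℓ⁻; and (iv) m(ω) → +∞ as ω → 0⁺. In particular, m takes every value in (0, ∞). -/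
/-!
Substituting `t = (p - 1) √ω / 2 · x + b_ω` turns the mass into
`m(ω) = K ((p + 1) / 2) ^ (2 / (p - 1)) (2 / (p - 1)) · ω ^ (2 / (p - 1) - 1 / 2) · T(b_ω)`,
where `T(b) = ∫_b^∞ sinh(t) ^ (-4 / (p - 1)) dt` is positive, strictly decreasing and tends to `0`
at `∞`. For `p ≥ 5` the power of `ω` is non-increasing, while `b_ω = arctanh √(ω / ℓ)` increases
from `0` to `∞` on `(0, ℓ)`; hence `m` is strictly decreasing and `m(ω) → 0` as `ω → ℓ`.
As `ω → 0`, `m(ω) → ∞`: for `p > 5` because of the negative power of `ω`, for `p = 5` because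
`∫_b^∞ dt / sinh t` diverges logarithmically as `b → 0`. The intermediate value theorem then
gives every positive mass.
-/

open MeasureTheory

open Set Filter Topology Real

namespace SupercriticalMass

section TailIntegral

variable {f : ℝ → ℝ} {a b : ℝ}

theorem setIntegral_Ioi_lt_of_pos (hf : IntegrableOn f (Ioi a)) (hab : a < b)
    (hpos : ∀ t ∈ Ioo a b, 0 < f t) : ∫ t in Ioi b, f t < ∫ t in Ioi a, f t := by
  have hsplit := intervalIntegral.integral_Ioi_sub_Ioi hf hab.le
  have hf' : IntervalIntegrable f volume a b :=
    (intervalIntegrable_iff_integrableOn_Ioc_of_le hab.le).2 (hf.mono_set Ioc_subset_Ioi_self)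
  have := intervalIntegral.intervalIntegral_pos_of_pos_on hf' hpos hab
  linarith

theorem setIntegral_Ioi_pos (hf : IntegrableOn f (Ioi a)) (hpos : ∀ t ∈ Ioi a, 0 < f t) :
    0 < ∫ t in Ioi a, f t := by
  have hlt := setIntegral_Ioi_lt_of_pos hf (lt_add_one a) fun t ht => hpos t ht.1
  have hnonneg : 0 ≤ ∫ t in Ioi (a + 1), f t := setIntegral_nonneg measurableSet_Ioi
    fun t ht => (hpos t ((lt_add_one a).trans ht)).le
  linarith

theorem tendsto_setIntegral_Ioi_atTop (hf : IntegrableOn f (Ioi a)) :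
    Tendsto (fun b => ∫ t in Ioi b, f t) atTop (𝓝 0) := by
  have h := tendsto_const_nhds (x := ∫ t in Ioi a, f t) |>.sub
    (intervalIntegral_tendsto_integral_Ioi a hf tendsto_id)
  rw [sub_self] at h
  refine h.congr' ?_
  filter_upwards [eventually_ge_atTop a] with b hb
  rw [id, ← intervalIntegral.integral_Ioi_sub_Ioi hf hb, sub_sub_cancel]

theorem setIntegral_Ioi_comp_add_right (f : ℝ → ℝ) (b : ℝ) :
    ∫ x in Ioi 0, f (x + b) = ∫ t in Ioi b, f t := by
  have := (measurePreserving_add_right volume b).setIntegral_preimage_emb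
    (measurableEmbedding_addRight b) f (Ioi b)
  rwa [preimage_add_const_Ioi, sub_self] at this

theorem integrableOn_Ioi_comp_add_right (hf : IntegrableOn f (Ioi b)) :
    IntegrableOn (fun x => f (x + b)) (Ioi 0) := by
  have := ((measurePreserving_add_right volume b).integrableOn_comp_preimage
    (measurableEmbedding_addRight b)).2 hf
  rwa [preimage_add_const_Ioi, sub_self] at this

theorem setIntegral_Ioi_comp_mul_add (f : ℝ → ℝ) (ha : 0 < a) (b : ℝ) :
    ∫ x in Ioi 0, f (a * x + b) = a⁻¹ * ∫ t in Ioi b, f t := by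
  rw [integral_comp_mul_left_Ioi (fun u => f (u + b)) 0 ha, mul_zero, smul_eq_mul,
    setIntegral_Ioi_comp_add_right]

theorem integrableOn_Ioi_comp_mul_add (ha : 0 < a) (hf : IntegrableOn f (Ioi b)) :
    IntegrableOn (fun x => f (a * x + b)) (Ioi 0) := by
  have := integrableOn_Ioi_comp_add_right hf
  rwa [← mul_zero a, ← integrableOn_Ioi_comp_mul_left_iff _ 0 ha] at this

end TailIntegral

section Sinh

theorem sinh_mul_exp_sub_le {b t : ℝ} (h : b ≤ t) : sinh b * exp (t - b) ≤ sinh t := by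
  have key : exp (-t) ≤ exp (t - 2 * b) := exp_le_exp.2 (by linarith)
  have h1 : exp b * exp (t - b) = exp t := by rw [← exp_add]; ring_nf
  have h2 : exp (-b) * exp (t - b) = exp (t - 2 * b) := by rw [← exp_add]; ring_nf
  rw [sinh_eq, sinh_eq, div_mul_eq_mul_div, sub_mul, h1, h2]
  linarith

theorem sinh_le_mul_exp (t : ℝ) : sinh t ≤ t * exp t := by
  have h1 : exp (-t) = exp t * exp (-2 * t) := by rw [← exp_add]; ring_nf
  have h2 := add_one_le_exp (-2 * t)
  rw [sinh_eq, h1]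
  nlinarith [exp_pos t]

noncomputable def sinhRpowTail (α b : ℝ) : ℝ := ∫ t in Ioi b, sinh t ^ (-α)

variable {α b : ℝ}

theorem integrableOn_sinh_rpow_neg (hα : 0 < α) (hb : 0 < b) :
    IntegrableOn (fun t => sinh t ^ (-α)) (Ioi b) := by
  have hsb : 0 < sinh b := sinh_pos_iff.2 hb
  refine Integrable.mono' ((exp_neg_integrableOn_Ioi b hα).const_mul
    (sinh b ^ (-α) * exp (α * b)))
    (continuous_sinh.measurable.pow_const _).aestronglyMeasurable ?_
  rw [ae_restrict_iff' measurableSet_Ioi]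
  refine ae_of_all _ fun t (ht : b < t) => ?_
  rw [norm_of_nonneg (rpow_nonneg (sinh_nonneg_iff.2 (hb.trans ht).le) _)]
  calc sinh t ^ (-α) ≤ (sinh b * exp (t - b)) ^ (-α) :=
        rpow_le_rpow_of_nonpos (by positivity) (sinh_mul_exp_sub_le ht.le) (by linarith)
    _ = sinh b ^ (-α) * exp (α * b) * exp (-α * t) := by
        rw [mul_rpow hsb.le (exp_pos _).le, ← exp_mul, mul_assoc, ← exp_add]
        ring_nf

theorem sinhRpowTail_pos (hα : 0 < α) (hb : 0 < b) : 0 < sinhRpowTail α b :=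
  setIntegral_Ioi_pos (integrableOn_sinh_rpow_neg hα hb)
    fun _ ht => rpow_pos_of_pos (sinh_pos_iff.2 (hb.trans ht)) _

theorem strictAntiOn_sinhRpowTail (hα : 0 < α) : StrictAntiOn (sinhRpowTail α) (Ioi 0) :=
  fun _ hb₁ _ _ h => setIntegral_Ioi_lt_of_pos (integrableOn_sinh_rpow_neg hα hb₁) h
    fun _ ht => rpow_pos_of_pos (sinh_pos_iff.2 (lt_trans hb₁ ht.1)) _

theorem continuousOn_sinhRpowTail (hα : 0 < α) : ContinuousOn (sinhRpowTail α) (Ioi 0) :=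
  fun b (hb : 0 < b) =>
    ((integrableOn_sinh_rpow_neg hα (half_pos hb)).continuousOn_Ici_primitive_Ioi.continuousAt
      (Ici_mem_nhds (half_lt_self hb))).continuousWithinAt

theorem tendsto_sinhRpowTail_atTop (hα : 0 < α) :
    Tendsto (sinhRpowTail α) atTop (𝓝 0) :=
  tendsto_setIntegral_Ioi_atTop (integrableOn_sinh_rpow_neg hα one_pos)

/-- On `(0, 1]`, `1 / sinh t ≥ exp (-1) / t`, whose integral diverges logarithmically at `0`. -/
theorem neg_log_mul_le_sinhRpowTail_one (hb₀ : 0 < b) (hb₁ : b ≤ 1) :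
    -log b * exp (-1) ≤ sinhRpowTail 1 b := by
  have hint := integrableOn_sinh_rpow_neg one_pos hb₀
  have hsplit := intervalIntegral.integral_Ioi_sub_Ioi hint hb₁
  have htail : 0 ≤ sinhRpowTail 1 1 := (sinhRpowTail_pos one_pos one_pos).le
  have hmono : ∫ t in b..1, exp (-1) * t⁻¹ ≤ ∫ t in b..1, sinh t ^ (-1 : ℝ) := by
    refine intervalIntegral.integral_mono_on hb₁ ?_ ?_ fun t ht => ?_
    · refine ContinuousOn.intervalIntegrable ?_
      rw [uIcc_of_le hb₁]
      exact continuousOn_const.mul (continuousOn_inv₀.mono fun t ht => (hb₀.trans_le ht.1).ne')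
    · exact (intervalIntegrable_iff_integrableOn_Ioc_of_le hb₁).2
        (hint.mono_set Ioc_subset_Ioi_self)
    · have ht₀ : 0 < t := hb₀.trans_le ht.1
      have hs : sinh t ≤ t * exp 1 :=
        (sinh_le_mul_exp t).trans (mul_le_mul_of_nonneg_left (exp_le_exp.2 ht.2) ht₀.le)
      rw [rpow_neg_one, exp_neg, ← mul_inv, mul_comm]
      exact inv_anti₀ (sinh_pos_iff.2 ht₀) hs
  rw [intervalIntegral.integral_const_mul, integral_inv_of_pos hb₀ one_pos, div_eq_mul_inv,
    one_mul, log_inv] at hmono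
  unfold sinhRpowTail at htail ⊢
  linarith

theorem tendsto_sinhRpowTail_one_nhdsGT_zero :
    Tendsto (sinhRpowTail 1) (𝓝[>] 0) atTop := by
  have hlog : Tendsto (fun b => -log b * exp (-1)) (𝓝[>] 0) atTop :=
    (tendsto_neg_atBot_atTop.comp tendsto_log_nhdsGT_zero).atTop_mul_const (exp_pos _)
  refine tendsto_atTop_mono' _ ?_ hlog
  filter_upwards [Ioo_mem_nhdsGT one_pos] with b hb
  exact neg_log_mul_le_sinhRpowTail_one hb.1 hb.2.le

end Sinh

theorem arctanh_eq_artanh {y : ℝ} (hy : y ∈ Icc (-1) 1) : arctanh y = artanh y := by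
  rw [artanh_eq_half_log hy, arctanh]; ring

theorem continuousOn_arctanh : ContinuousOn arctanh (Ioo (-1) 1) := by
  refine ContinuousOn.div_const (ContinuousOn.log ?_ fun y hy => ?_) 2
  · exact (continuousOn_const.add continuousOn_id).div (continuousOn_const.sub continuousOn_id)
      fun y hy => by linarith [hy.2]
  · exact (div_pos (by linarith [hy.1]) (by linarith [hy.2])).ne'

theorem tendsto_arctanh_nhdsLT_one : Tendsto arctanh (𝓝[<] 1) atTop := by
  have hden : Tendsto (fun y : ℝ => 1 - y) (𝓝[<] 1) (𝓝[>] 0) := by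
    have h : Tendsto (fun y : ℝ => 1 - y) (𝓝 1) (𝓝 (1 - 1)) :=
      tendsto_const_nhds.sub tendsto_id
    rw [sub_self] at h
    exact tendsto_nhdsWithin_of_tendsto_nhds_of_eventually_within _
      (h.mono_left nhdsWithin_le_nhds)
      (eventually_nhdsWithin_of_forall fun y (hy : y < 1) => sub_pos.2 hy)
  have hnum : Tendsto (fun y : ℝ => 1 + y) (𝓝[<] 1) (𝓝 2) := by
    have h : Tendsto (fun y : ℝ => 1 + y) (𝓝 1) (𝓝 (1 + 1)) :=
      tendsto_const_nhds.add tendsto_id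
    norm_num at h
    exact h.mono_left nhdsWithin_le_nhds
  have hquot := hnum.pos_mul_atTop two_pos (tendsto_inv_nhdsGT_zero.comp hden)
  exact (tendsto_log_atTop.comp hquot).atTop_div_const two_pos

section Profile

/-- The paper's `φ_{p,ω,b}`. -/
noncomputable def halfLineProfile (p ω b x : ℝ) : ℝ :=
  ((p + 1) * ω / 2) ^ (1 / (p - 1)) * sinh ((p - 1) * √ω / 2 * x + b) ^ (-2 / (p - 1))

variable {p ω b x : ℝ}

theorem halfLineProfile_sq (hp : 1 < p) (hω : 0 ≤ ω) (hb : 0 ≤ b) (hx : 0 ≤ x) :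
    halfLineProfile p ω b x ^ 2 = ((p + 1) * ω / 2) ^ (2 / (p - 1)) *
      sinh ((p - 1) * √ω / 2 * x + b) ^ (-(4 / (p - 1))) := by
  have hC : 0 ≤ (p + 1) * ω / 2 := div_nonneg (mul_nonneg (by linarith) hω) zero_le_two
  have hs : 0 ≤ sinh ((p - 1) * √ω / 2 * x + b) := by
    rw [sinh_nonneg_iff]
    have : 0 ≤ p - 1 := by linarith
    positivity
  rw [halfLineProfile, mul_pow, ← rpow_mul_natCast hC, ← rpow_mul_natCast hs]
  congr 2 <;> push_cast <;> ring

theorem integrableOn_halfLineProfile_sq (hp : 1 < p) (hω : 0 < ω) (hb : 0 < b) :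
    IntegrableOn (fun x => halfLineProfile p ω b x ^ 2) (Ioi 0) := by
  have ha : 0 < (p - 1) * √ω / 2 := by
    have : 0 < p - 1 := by linarith
    have := sqrt_pos.2 hω
    positivity
  refine IntegrableOn.congr_fun ?_ (fun x (hx : 0 < x) =>
    (halfLineProfile_sq hp hω.le hb.le hx.le).symm) measurableSet_Ioi
  exact (integrableOn_Ioi_comp_mul_add ha
    (integrableOn_sinh_rpow_neg (div_pos four_pos (by linarith)) hb)).const_mul _

theorem integral_halfLineProfile_sq (hp : 1 < p) (hω : 0 < ω) (hb : 0 < b) :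
    ∫ x in Ioi 0, halfLineProfile p ω b x ^ 2 = ((p + 1) / 2) ^ (2 / (p - 1)) * (2 / (p - 1)) *
      (ω ^ (2 / (p - 1) - 1 / 2) * sinhRpowTail (4 / (p - 1)) b) := by
  have hp1 : 0 < p - 1 := by linarith
  have ha : 0 < (p - 1) * √ω / 2 := by
    have := sqrt_pos.2 hω
    positivity
  rw [setIntegral_congr_fun measurableSet_Ioi fun x (hx : 0 < x) =>
      halfLineProfile_sq hp hω.le hb.le hx.le, integral_const_mul,
    setIntegral_Ioi_comp_mul_add (fun t => sinh t ^ (-(4 / (p - 1)))) ha b, ← sinhRpowTail,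
    mul_div_right_comm, mul_rpow (by linarith) hω.le, rpow_sub hω, sqrt_eq_rpow]
  field_simp

end Profile

theorem Ioi_subset_image_Ioo {f : ℝ → ℝ} {a b v : ℝ} (hab : a < b)
    (hf : ContinuousOn f (Ioo a b)) (ha : Tendsto f (𝓝[>] a) atTop)
    (hb : Tendsto f (𝓝[<] b) (𝓝 v)) : Ioi v ⊆ f '' Ioo a b :=
  haveI := left_nhdsWithin_Ioo_neBot hab
  haveI := right_nhdsWithin_Ioo_neBot hab
  isPreconnected_Ioo.intermediate_value_Ioi (l₁ := 𝓝[Ioo a b] b) (l₂ := 𝓝[Ioo a b] a)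
    inf_le_right inf_le_right hf
    (hb.mono_left (nhdsWithin_mono _ Ioo_subset_Iio_self))
    (ha.mono_left (nhdsWithin_mono _ Ioo_subset_Ioi_self))

section Branch

/-- The paper's `b_ω`. -/
noncomputable def groundStateShift (ℓ ω : ℝ) : ℝ := arctanh √(ω / ℓ)

noncomputable def reducedMass (p ℓ ω : ℝ) : ℝ :=
  ω ^ (2 / (p - 1) - 1 / 2) * sinhRpowTail (4 / (p - 1)) (groundStateShift ℓ ω)

variable {p ℓ ω : ℝ}

theorem sqrt_div_mem_Ioo (hω : ω ∈ Ioo 0 ℓ) : √(ω / ℓ) ∈ Ioo 0 1 := by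
  have hℓ := hω.1.trans hω.2
  refine ⟨sqrt_pos.2 (div_pos hω.1 hℓ), (sqrt_lt' one_pos).2 ?_⟩
  rw [one_pow]
  exact (div_lt_one hℓ).2 hω.2

theorem groundStateShift_eq_artanh (hω : ω ∈ Ioo 0 ℓ) :
    groundStateShift ℓ ω = artanh √(ω / ℓ) :=
  arctanh_eq_artanh (Ioo_subset_Icc_self (Ioo_subset_Ioo_left neg_one_lt_zero.le
    (sqrt_div_mem_Ioo hω)))

theorem groundStateShift_pos (hω : ω ∈ Ioo 0 ℓ) : 0 < groundStateShift ℓ ω := by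
  rw [groundStateShift_eq_artanh hω]
  exact artanh_pos (sqrt_div_mem_Ioo hω)

theorem strictMonoOn_groundStateShift : StrictMonoOn (groundStateShift ℓ) (Ioo 0 ℓ) := by
  intro ω₁ h₁ ω₂ h₂ h
  have hℓ := h₁.1.trans h₁.2
  rw [groundStateShift_eq_artanh h₁, groundStateShift_eq_artanh h₂]
  exact artanh_lt_artanh (by linarith [(sqrt_div_mem_Ioo h₁).1]) (sqrt_div_mem_Ioo h₂).2
    (sqrt_lt_sqrt (div_nonneg h₁.1.le hℓ.le) (div_lt_div_of_pos_right h hℓ))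

theorem continuousOn_groundStateShift : ContinuousOn (groundStateShift ℓ) (Ioo 0 ℓ) :=
  continuousOn_arctanh.comp (by fun_prop) fun _ hω =>
    Ioo_subset_Ioo_left neg_one_lt_zero.le (sqrt_div_mem_Ioo hω)

theorem tendsto_groundStateShift_nhdsLT (hℓ : 0 < ℓ) :
    Tendsto (groundStateShift ℓ) (𝓝[<] ℓ) atTop := by
  refine tendsto_arctanh_nhdsLT_one.comp
    (tendsto_nhdsWithin_of_tendsto_nhds_of_eventually_within _ ?_ ?_)
  · have h : Tendsto (fun ω => √(ω / ℓ)) (𝓝 ℓ) (𝓝 √(ℓ / ℓ)) :=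
      (show Continuous fun ω => √(ω / ℓ) by fun_prop).tendsto ℓ
    rw [div_self hℓ.ne', sqrt_one] at h
    exact h.mono_left nhdsWithin_le_nhds
  · filter_upwards [Ioo_mem_nhdsLT hℓ] with ω hω using (sqrt_div_mem_Ioo hω).2

theorem tendsto_groundStateShift_nhdsGT_zero (hℓ : 0 < ℓ) :
    Tendsto (groundStateShift ℓ) (𝓝[>] 0) (𝓝[>] 0) := by
  refine tendsto_nhdsWithin_of_tendsto_nhds_of_eventually_within _ ?_ ?_
  · have harctanh : ContinuousAt arctanh 0 :=
      continuousOn_arctanh.continuousAt (Ioo_mem_nhds (by norm_num) one_pos)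
    have hsqrt : Tendsto (fun ω => √(ω / ℓ)) (𝓝 0) (𝓝 0) := by
      simpa using (show Continuous fun ω => √(ω / ℓ) by fun_prop).tendsto 0
    have h := harctanh.tendsto.comp hsqrt
    rw [show arctanh 0 = 0 by simp [arctanh]] at h
    exact h.mono_left nhdsWithin_le_nhds
  · filter_upwards [Ioo_mem_nhdsGT hℓ] with ω hω using groundStateShift_pos hω

theorem reducedMass_pos (hp : 1 < p) (hω : ω ∈ Ioo 0 ℓ) : 0 < reducedMass p ℓ ω :=
  mul_pos (rpow_pos_of_pos hω.1 _)
    (sinhRpowTail_pos (div_pos four_pos (by linarith)) (groundStateShift_pos hω))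

theorem strictAntiOn_reducedMass (hp : 5 ≤ p) : StrictAntiOn (reducedMass p ℓ) (Ioo 0 ℓ) := by
  intro ω₁ h₁ ω₂ h₂ h
  have hα : 0 < 4 / (p - 1) := div_pos four_pos (by linarith)
  have he : 2 / (p - 1) - 1 / 2 ≤ 0 := by
    rw [sub_nonpos, div_le_iff₀ (by linarith)]
    linarith
  have htail := strictAntiOn_sinhRpowTail hα (groundStateShift_pos h₁)
    (groundStateShift_pos h₂) (strictMonoOn_groundStateShift h₁ h₂ h)
  calc reducedMass p ℓ ω₂
      < ω₂ ^ (2 / (p - 1) - 1 / 2) * sinhRpowTail (4 / (p - 1)) (groundStateShift ℓ ω₁) :=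
        mul_lt_mul_of_pos_left htail (rpow_pos_of_pos h₂.1 _)
    _ ≤ reducedMass p ℓ ω₁ :=
        mul_le_mul_of_nonneg_right (rpow_le_rpow_of_nonpos h₁.1 h.le he)
          (sinhRpowTail_pos hα (groundStateShift_pos h₁)).le

theorem continuousOn_reducedMass (hp : 1 < p) : ContinuousOn (reducedMass p ℓ) (Ioo 0 ℓ) :=
  (continuousOn_id.rpow_const fun _ hω => Or.inl hω.1.ne').mul
    ((continuousOn_sinhRpowTail (div_pos four_pos (by linarith))).comp
      continuousOn_groundStateShift fun _ hω => groundStateShift_pos hω)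

theorem tendsto_reducedMass_nhdsLT (hp : 1 < p) (hℓ : 0 < ℓ) :
    Tendsto (reducedMass p ℓ) (𝓝[<] ℓ) (𝓝 0) := by
  have hα : 0 < 4 / (p - 1) := div_pos four_pos (by linarith)
  have hpow : Tendsto (fun ω => ω ^ (2 / (p - 1) - 1 / 2)) (𝓝[<] ℓ)
      (𝓝 (ℓ ^ (2 / (p - 1) - 1 / 2))) :=
    (continuousAt_id.rpow_const (Or.inl hℓ.ne')).tendsto.mono_left nhdsWithin_le_nhds
  have h := hpow.mul ((tendsto_sinhRpowTail_atTop hα).comp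
    (tendsto_groundStateShift_nhdsLT hℓ))
  rwa [mul_zero] at h

theorem tendsto_reducedMass_nhdsGT_zero (hp : 5 ≤ p) (hℓ : 0 < ℓ) :
    Tendsto (reducedMass p ℓ) (𝓝[>] 0) atTop := by
  -- At `p = 5` the power of `ω` is `ω ^ 0` and the blow-up comes from the tail integral alone.
  rcases hp.eq_or_lt with rfl | hp
  · have hcritical : reducedMass 5 ℓ = fun ω => sinhRpowTail 1 (groundStateShift ℓ ω) := by
      funext ω
      norm_num [reducedMass]
    rw [hcritical]
    exact tendsto_sinhRpowTail_one_nhdsGT_zero.comp (tendsto_groundStateShift_nhdsGT_zero hℓ)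
  · have hα : 0 < 4 / (p - 1) := div_pos four_pos (by linarith)
    have he : 2 / (p - 1) - 1 / 2 < 0 := by
      rw [sub_neg, div_lt_iff₀ (by linarith)]
      linarith
    have hlow := (tendsto_rpow_neg_nhdsGT_zero he).atTop_mul_const (sinhRpowTail_pos hα one_pos)
    refine tendsto_atTop_mono' _ ?_ hlow
    filter_upwards [Ioo_mem_nhdsGT hℓ,
      tendsto_groundStateShift_nhdsGT_zero hℓ (Ioo_mem_nhdsGT one_pos)] with ω hω hb
    exact mul_le_mul_of_nonneg_left ((strictAntiOn_sinhRpowTail hα).antitoneOn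
      (groundStateShift_pos hω) (mem_Ioi.2 one_pos) hb.2.le) (rpow_pos_of_pos hω.1 _).le

end Branch

end SupercriticalMass

open SupercriticalMass in
/-- Critical/supercritical mass of the ground-state branch: for `p ≥ 5`, the squared `L²`
norm `m(ω)` of the explicit ground state on the star graph is finite and positive,
strictly decreasing on `(0, ℓ)` with `ℓ = γ²/K²`, tends to `0` as `ω → ℓ⁻`, tends to `+∞`
as `ω → 0⁺`, and takes every value in `(0, ∞)`. -/
theorem supercritical_mass_branch (K : ℕ) (hK : 1 ≤ K) (γ p : ℝ)
    (hγ : γ < 0) (hp : 5 ≤ p)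
    (ℓ : ℝ) (hℓ : ℓ = γ ^ 2 / (K : ℝ) ^ 2)
    (m : ℝ → ℝ)
    (hm : ∀ ω ∈ Set.Ioo (0:ℝ) ℓ, m ω = (K : ℝ) *
      ∫ x in Set.Ioi (0:ℝ),
        (((p + 1) * ω / 2) ^ (1 / (p - 1)) *
          (Real.sinh ((p - 1) * Real.sqrt ω / 2 * x +
            arctanh (Real.sqrt (ω / ℓ)))) ^ (-2 / (p - 1))) ^ 2) :
    (∀ ω ∈ Set.Ioo (0:ℝ) ℓ,
      IntegrableOn (fun x =>
        (((p + 1) * ω / 2) ^ (1 / (p - 1)) *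
          (Real.sinh ((p - 1) * Real.sqrt ω / 2 * x +
            arctanh (Real.sqrt (ω / ℓ)))) ^ (-2 / (p - 1))) ^ 2) (Set.Ioi 0) ∧
      0 < m ω) ∧
    StrictAntiOn m (Set.Ioo 0 ℓ) ∧
    Filter.Tendsto m (nhdsWithin ℓ (Set.Iio ℓ)) (nhds 0) ∧
    Filter.Tendsto m (nhdsWithin 0 (Set.Ioi 0)) Filter.atTop ∧
    (∀ m₀ > (0:ℝ), ∃ ω ∈ Set.Ioo (0:ℝ) ℓ, m ω = m₀) := by
  have hp1 : 1 < p := by linarith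
  have hK0 : (0 : ℝ) < K := by exact_mod_cast hK
  have hℓ0 : 0 < ℓ := by
    have := hγ.ne
    rw [hℓ]
    positivity
  set c : ℝ := K * (((p + 1) / 2) ^ (2 / (p - 1)) * (2 / (p - 1))) with hc_def
  have hc : 0 < c := mul_pos hK0 (mul_pos (rpow_pos_of_pos (by linarith) _)
    (div_pos two_pos (by linarith)))
  have hmass : EqOn m (fun ω => c * reducedMass p ℓ ω) (Ioo 0 ℓ) := fun ω hω => by
    show m ω = c * reducedMass p ℓ ω
    rw [hm ω hω, hc_def, mul_assoc]
    exact congrArg ((K : ℝ) * ·)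
      (integral_halfLineProfile_sq hp1 hω.1 (groundStateShift_pos hω))
  have hcont : ContinuousOn m (Ioo 0 ℓ) :=
    (continuousOn_const.mul (continuousOn_reducedMass hp1)).congr hmass
  have hlimℓ : Tendsto m (𝓝[<] ℓ) (𝓝 0) := by
    simpa using ((tendsto_reducedMass_nhdsLT hp1 hℓ0).const_mul c).congr'
      (eventuallyEq_of_mem (Ioo_mem_nhdsLT hℓ0) hmass).symm
  have hlim0 : Tendsto m (𝓝[>] 0) atTop :=
    ((tendsto_reducedMass_nhdsGT_zero hp hℓ0).const_mul_atTop hc).congr'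
      (eventuallyEq_of_mem (Ioo_mem_nhdsGT hℓ0) hmass).symm
  refine ⟨fun ω hω => ⟨integrableOn_halfLineProfile_sq hp1 hω.1 (groundStateShift_pos hω), ?_⟩,
    fun ω₁ h₁ ω₂ h₂ h => ?_, hlimℓ, hlim0,
    fun m₀ hm₀ => Ioi_subset_image_Ioo hℓ0 hcont hlim0 hlimℓ hm₀⟩
  · rw [hmass hω]
    exact mul_pos hc (reducedMass_pos hp1 hω)
  · rw [hmass h₁, hmass h₂]
    exact mul_lt_mul_of_pos_left (strictAntiOn_reducedMass hp h₁ h₂ h) hc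
end
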